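/- Arrow update model logic is invariant under bisimulation: if (M,s) and (M',s') are bisimilar pointed relational models, then for every formula φ of arrow update model logic, M,s ⊨ φ iff M',s' ⊨ φ. -/

import Mathlib

/-!
Induction on the formula, with invariance proved simultaneously for all pairs of models and
all bisimulations between them, since `[U,o]φ` evaluates `φ` in the new models `M*U` and `N*U`.
There, pairing worlds related by `Z` that carry the same outcome is again a bisimulation: the
arrow conditions are subformulas, so by induction they cannot tell `Z`-related worlds apart,
and hence neither can the arrows of `M*U` and `N*U`.
-/

namespace AAUML

/-- Formulas of arbitrary arrow update model logic over atoms `P` and agents `A`.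
An arrow update model is encoded as a finite list of arrows
`(agent, source outcome, source condition, target outcome, target condition)`,
with outcomes drawn from `ℕ`; `upd U o φ` is `[U,o]φ` and `all φ` is `[↑]φ`. -/
inductive Form (P A : Type) : Type where
  | atom : P → Form P A
  | neg  : Form P A → Form P A
  | and  : Form P A → Form P A → Form P A
  | box  : A → Form P A → Form P A
  | upd  : List (A × ℕ × Form P A × ℕ × Form P A) → ℕ → Form P A → Form P A
  | all  : Form P A → Form P A

/-- An arrow: agent, source outcome, source condition, target outcome, target condition. -/
abbrev Arrow (P A : Type) := A × ℕ × Form P A × ℕ × Form P A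

/-- Formulas of basic multi-agent modal logic: no update modality, no quantifier. -/
inductive Form.Modal {P A : Type} : Form P A → Prop
  | atom (p : P) : Form.Modal (.atom p)
  | neg {φ : Form P A} : Form.Modal φ → Form.Modal (.neg φ)
  | and {φ ψ : Form P A} : Form.Modal φ → Form.Modal ψ → Form.Modal (.and φ ψ)
  | box (a : A) {φ : Form P A} : Form.Modal φ → Form.Modal (.box a φ)

/-- Formulas of arrow update model logic (no arbitrary-update quantifier anywhere,
including inside the conditions of arrow update models). -/
inductive Form.NoQuant {P A : Type} : Form P A → Prop
  | atom (p : P) : Form.NoQuant (.atom p)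
  | neg {φ : Form P A} : Form.NoQuant φ → Form.NoQuant (.neg φ)
  | and {φ ψ : Form P A} : Form.NoQuant φ → Form.NoQuant ψ → Form.NoQuant (.and φ ψ)
  | box (a : A) {φ : Form P A} : Form.NoQuant φ → Form.NoQuant (.box a φ)
  | upd {U : List (Arrow P A)} (o : ℕ) {φ : Form P A} : Form.NoQuant φ →
      (∀ ar ∈ U, Form.NoQuant ar.2.2.1) → (∀ ar ∈ U, Form.NoQuant ar.2.2.2.2) →
      Form.NoQuant (.upd U o φ)

/-- Propositional formulas (no modalities at all). -/
inductive Form.Prp {P A : Type} : Form P A → Prop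
  | atom (p : P) : Form.Prp (.atom p)
  | neg {φ : Form P A} : Form.Prp φ → Form.Prp (.neg φ)
  | and {φ ψ : Form P A} : Form.Prp φ → Form.Prp ψ → Form.Prp (.and φ ψ)

/-- A relational (Kripke) model. -/
structure KModel (P A : Type) : Type 1 where
  World : Type
  R : A → World → World → Prop
  V : World → P → Prop

variable {P A : Type}

/-- Satisfaction for basic modal formulas (junk value `False` on updates/quantifiers;
only used on modal formulas). -/
def msat (M : KModel P A) : M.World → Form P A → Prop
  | s, .atom p => M.V s p
  | s, .neg φ => ¬ msat M s φ
  | s, .and φ ψ => msat M s φ ∧ msat M s ψ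
  | s, .box a φ => ∀ t, M.R a s t → msat M t φ
  | _, .upd _ _ _ => False
  | _, .all _ => False

/-- Some arrow of `U` for agent `a` from outcome `o` to outcome `o'` has its (modal)
source condition true at `s` and its target condition true at `s'`. -/
def marrowOK (M : KModel P A) (U : List (Arrow P A)) (a : A) (o o' : ℕ)
    (s s' : M.World) : Prop :=
  ∃ ψ ψ', (a, o, ψ, o', ψ') ∈ U ∧ msat M s ψ ∧ msat M s' ψ'

/-- All source and target conditions of `U` are basic modal formulas. -/
def ModalArrows (U : List (Arrow P A)) : Prop :=
  ∀ ar ∈ U, Form.Modal ar.2.2.1 ∧ Form.Modal ar.2.2.2.2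

mutual
  /-- Satisfaction `M,s ⊨ φ`.  The case `upd U o φ` is interpreted in the product
  model `M*U` (inlined); `all φ` quantifies over all arrow update models with basic
  modal source and target conditions. -/
  def Form.sat : (M : KModel P A) → M.World → Form P A → Prop
    | M, s, .atom p => M.V s p
    | M, s, .neg φ => ¬ Form.sat M s φ
    | M, s, .and φ ψ => Form.sat M s φ ∧ Form.sat M s ψ
    | M, s, .box a φ => ∀ t, M.R a s t → Form.sat M t φ
    | M, s, .upd U o φ =>
        Form.sat ⟨M.World × ℕ,
          fun a x y => M.R a x.1 y.1 ∧ satList M U a x.2 y.2 x.1 y.1,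
          fun x p => M.V x.1 p⟩ (s, o) φ
    | M, s, .all φ => ∀ (U : List (Arrow P A)) (o : ℕ), ModalArrows U →
        Form.sat ⟨M.World × ℕ,
          fun a x y => M.R a x.1 y.1 ∧ marrowOK M U a x.2 y.2 x.1 y.1,
          fun x p => M.V x.1 p⟩ (s, o) φ
  termination_by M s φ => sizeOf φ

  /-- Some arrow of the list, for agent `a`, from `o` to `o'`, has its source condition
  true at `s` and its target condition true at `s'`. -/
  def satList : (M : KModel P A) → List (Arrow P A) → A → ℕ → ℕ → M.World → M.World → Prop
    | _, [], _, _, _, _, _ => False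
    | M, (b, o1, ψ, o2, ψ') :: rest, a, o, o', s, s' =>
        (b = a ∧ o1 = o ∧ o2 = o' ∧ Form.sat M s ψ ∧ Form.sat M s' ψ') ∨
        satList M rest a o o' s s'
  termination_by M U a o o' s s' => sizeOf U
end

/-- The product `M*U` of a relational model and an arrow update model. -/
def prodModel (M : KModel P A) (U : List (Arrow P A)) : KModel P A :=
  ⟨M.World × ℕ,
   fun a x y => M.R a x.1 y.1 ∧ satList M U a x.2 y.2 x.1 y.1,
   fun x p => M.V x.1 p⟩

def Valid (φ : Form P A) : Prop := ∀ (M : KModel P A) (s : M.World), Form.sat M s φ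

def Form.or (φ ψ : Form P A) : Form P A := .neg (.and (.neg φ) (.neg ψ))
def Form.imp (φ ψ : Form P A) : Form P A := .neg (.and φ (.neg ψ))
def Form.dia (a : A) (φ : Form P A) : Form P A := .neg (.box a (.neg φ))
/-- `⟨U,o⟩φ` -/
def Form.diaUpd (U : List (Arrow P A)) (o : ℕ) (φ : Form P A) : Form P A :=
  .neg (.upd U o (.neg φ))
/-- `⟨↑⟩φ` -/
def Form.ex (φ : Form P A) : Form P A := .neg (.all (.neg φ))
/-- A canonical tautology. -/
def Form.top [Inhabited P] : Form P A := .neg (.and (.atom default) (.neg (.atom default)))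
/-- Finite conjunction. -/
def Form.conj [Inhabited P] : List (Form P A) → Form P A
  | [] => Form.top
  | φ :: rest => .and φ (Form.conj rest)

/-- `Z` is a bisimulation between `M` and `N`. -/
def IsBisim (M N : KModel P A) (Z : M.World → N.World → Prop) : Prop :=
  ∀ s s', Z s s' →
    (∀ p, M.V s p ↔ N.V s' p) ∧
    (∀ a t, M.R a s t → ∃ t', N.R a s' t' ∧ Z t t') ∧
    (∀ a t', N.R a s' t' → ∃ t, M.R a s t ∧ Z t t')

/-- Bisimilarity of pointed models. -/
def Bisimilar (M : KModel P A) (s : M.World) (N : KModel P A) (s' : N.World) : Prop :=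
  ∃ Z, IsBisim M N Z ∧ Z s s'

/-- An action model: actions with accessibility relations and preconditions. -/
structure AModel (P A : Type) : Type 1 where
  Action : Type
  rel : A → Action → Action → Prop
  pre : Action → Form P A

/-- The restricted modal product `M ⊗ E`. -/
def actProd (M : KModel P A) (E : AModel P A) : KModel P A :=
  ⟨{x : M.World × E.Action // Form.sat M x.1 (E.pre x.2)},
   fun a x y => M.R a x.1.1 y.1.1 ∧ E.rel a x.1.2 y.1.2,
   fun x p => M.V x.1.1 p⟩

/-- `M,s ⊨ [E,e]φ`: if the precondition of `e` holds at `s` then `φ` holds at `(s,e)`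
in `M ⊗ E`. -/
def actSat (M : KModel P A) (E : AModel P A) (s : M.World) (e : E.Action)
    (φ : Form P A) : Prop :=
  ∀ h : Form.sat M s (E.pre e), Form.sat (actProd M E) ⟨(s, e), h⟩ φ

theorem sat_upd_iff (M : KModel P A) (U : List (Arrow P A)) (o : ℕ) (φ : Form P A)
    (s : M.World) : Form.sat M s (.upd U o φ) ↔ Form.sat (prodModel M U) (s, o) φ := by
  rw [Form.sat]
  rfl

def BisimInvariant (φ : Form P A) : Prop :=
  ∀ (M N : KModel P A) (Z : M.World → N.World → Prop), IsBisim M N Z →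
    ∀ s s', Z s s' → (Form.sat M s φ ↔ Form.sat N s' φ)

section Product

variable {M N : KModel P A} {Z : M.World → N.World → Prop} {U : List (Arrow P A)}

theorem satList_congr
    (hU : ∀ ar ∈ U, ∀ s s', Z s s' →
      (Form.sat M s ar.2.2.1 ↔ Form.sat N s' ar.2.2.1) ∧
      (Form.sat M s ar.2.2.2.2 ↔ Form.sat N s' ar.2.2.2.2))
    (a : A) (o o' : ℕ) {s t : M.World} {s' t' : N.World} (hs : Z s s') (ht : Z t t') :
    satList M U a o o' s t ↔ satList N U a o o' s' t' := by
  induction U with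
  | nil => simp only [satList]
  | cons ar rest ih =>
    obtain ⟨b, o₁, ψ, o₂, ψ'⟩ := ar
    have hsrc := (hU _ List.mem_cons_self s s' hs).1
    have htgt := (hU _ List.mem_cons_self t t' ht).2
    simp only [satList]
    rw [ih fun ar hm => hU ar (List.mem_cons_of_mem _ hm), hsrc, htgt]

theorem IsBisim.prodModel (hZ : IsBisim M N Z)
    (hU : ∀ ar ∈ U, ∀ s s', Z s s' →
      (Form.sat M s ar.2.2.1 ↔ Form.sat N s' ar.2.2.1) ∧
      (Form.sat M s ar.2.2.2.2 ↔ Form.sat N s' ar.2.2.2.2)) :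
    IsBisim (prodModel M U) (prodModel N U) fun x y => Z x.1 y.1 ∧ x.2 = y.2 := by
  rintro ⟨s, o⟩ ⟨s', _⟩ ⟨hs, rfl⟩
  obtain ⟨hV, hforth, hback⟩ := hZ s s' hs
  refine ⟨hV, ?forth, ?back⟩
  case forth =>
    rintro a ⟨t, o'⟩ ⟨hst, harrow⟩
    obtain ⟨t', hst', ht⟩ := hforth a t hst
    exact ⟨(t', o'), ⟨hst', (satList_congr hU a o o' hs ht).mp harrow⟩, ht, rfl⟩
  case back =>
    rintro a ⟨t', o'⟩ ⟨hst', harrow⟩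
    obtain ⟨t, hst, ht⟩ := hback a t' hst'
    exact ⟨(t, o'), ⟨hst, (satList_congr hU a o o' hs ht).mpr harrow⟩, ht, rfl⟩

end Product

namespace BisimInvariant

theorem atom (p : P) : BisimInvariant (.atom p : Form P A) :=
  fun _ _ _ hZ s s' hs => by simpa only [Form.sat] using (hZ s s' hs).1 p

theorem neg {φ : Form P A} (hφ : BisimInvariant φ) : BisimInvariant (.neg φ) :=
  fun M N Z hZ s s' hs => by simpa only [Form.sat] using not_congr (hφ M N Z hZ s s' hs)

theorem and {φ ψ : Form P A} (hφ : BisimInvariant φ) (hψ : BisimInvariant ψ) :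
    BisimInvariant (.and φ ψ) :=
  fun M N Z hZ s s' hs => by
    simpa only [Form.sat] using and_congr (hφ M N Z hZ s s' hs) (hψ M N Z hZ s s' hs)

theorem box (a : A) {φ : Form P A} (hφ : BisimInvariant φ) : BisimInvariant (.box a φ) := by
  intro M N Z hZ s s' hs
  simp only [Form.sat]
  constructor
  · intro h t' hst'
    obtain ⟨t, hst, ht⟩ := (hZ s s' hs).2.2 a t' hst'
    exact (hφ M N Z hZ t t' ht).mp (h t hst)
  · intro h t hst
    obtain ⟨t', hst', ht⟩ := (hZ s s' hs).2.1 a t hst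
    exact (hφ M N Z hZ t t' ht).mpr (h t' hst')

theorem upd {U : List (Arrow P A)} (o : ℕ) {φ : Form P A} (hφ : BisimInvariant φ)
    (hsrc : ∀ ar ∈ U, BisimInvariant ar.2.2.1)
    (htgt : ∀ ar ∈ U, BisimInvariant ar.2.2.2.2) :
    BisimInvariant (.upd U o φ) := by
  intro M N Z hZ s s' hs
  have hU : IsBisim (prodModel M U) (prodModel N U) fun x y => Z x.1 y.1 ∧ x.2 = y.2 :=
    hZ.prodModel fun ar har t t' ht =>
      ⟨hsrc ar har M N Z hZ t t' ht, htgt ar har M N Z hZ t t' ht⟩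
  rw [sat_upd_iff, sat_upd_iff]
  exact hφ _ _ _ hU (s, o) (s', o) ⟨hs, rfl⟩

end BisimInvariant

theorem Form.NoQuant.bisimInvariant {φ : Form P A} (hφ : φ.NoQuant) : BisimInvariant φ := by
  induction hφ with
  | atom p => exact .atom p
  | neg _ ih => exact ih.neg
  | and _ _ ih₁ ih₂ => exact ih₁.and ih₂
  | box a _ ih => exact ih.box a
  | upd o _ _ _ ih ihsrc ihtgt => exact .upd o ih ihsrc ihtgt

/-- arrow update model logic is invariant under bisimulation. -/
theorem auml_bisim_invariant (P A : Type) (M N : KModel P A)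
    (s : M.World) (s' : N.World) (hb : Bisimilar M s N s')
    (φ : Form P A) (hφ : φ.NoQuant) :
    Form.sat M s φ ↔ Form.sat N s' φ := by
  obtain ⟨Z, hZ, hs⟩ := hb
  exact hφ.bisimInvariant M N Z hZ s s' hs

end AAUML
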